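/- Let ψ ∈ H²(ℝ²) solve (−Δ + W)ψ = η on ℝ², where W: ℝ² → [0,1] is continuous with W(x) ≥ 1 − C₀ e^{−|x|}, and |η(x)| ≤ A e^{−γ|x|} for some γ ∈ (0,1) and A > 0. Then there is a constant C = C(γ, C₀, ‖ψ‖_{L^∞}) such that |ψ(x)| ≤ C A e^{−γ|x|} for all x ∈ ℝ². -/

import Mathlib

/-!
Comparison with the barrier `s(x) = c e^{-γ|x|}`. In the plane `Δs = (γ² - γ/|x|) s ≤ γ² s`, and
outside a ball `B_R` the potential satisfies `W ≥ (1 + γ²)/2`; so wherever `u = s ± ψ` is negative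
and `|x| > R`, `Δu = Δs ± (Wψ - η) ≤ W u + (A - c (1 - γ²)/2) e^{-γ|x|} < 0` once
`c ≥ 2A/(1 - γ²)`. Taking also `c ≥ M e^{γR}` makes `u ≥ 0` on `B_R`. Since `u → 0` at infinity,
a negative value of `u` would produce a global minimum, where `Δu ≥ 0`: a contradiction.
-/

open MeasureTheory

noncomputable section

abbrev Plane := EuclideanSpace ℝ (Fin 2)

def pdR (a : Fin 2) (f : Plane → ℝ) (x : Plane) : ℝ :=
  fderiv ℝ f x (EuclideanSpace.single a 1)

/-- Laplacian on `ℝ²`. -/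
def lap2 (f : Plane → ℝ) (x : Plane) : ℝ :=
  ∑ a : Fin 2, pdR a (pdR a f) x

open Filter Topology Real

theorem ContDiffAt.eventually_differentiableAt {𝕜 E F : Type*} [NontriviallyNormedField 𝕜]
    [NormedAddCommGroup E] [NormedSpace 𝕜 E] [NormedAddCommGroup F] [NormedSpace 𝕜 F]
    {f : E → F} {x : E} (hf : ContDiffAt 𝕜 1 f x) : ∀ᶠ y in 𝓝 x, DifferentiableAt 𝕜 f y :=
  (hf.eventually (by simp)).mono fun _ hy => hy.differentiableAt one_ne_zero

theorem ContDiffAt.differentiableAt_fderiv_apply {𝕜 E F : Type*} [NontriviallyNormedField 𝕜]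
    [NormedAddCommGroup E] [NormedSpace 𝕜 E] [NormedAddCommGroup F] [NormedSpace 𝕜 F]
    {f : E → F} {x : E} (hf : ContDiffAt 𝕜 2 f x) (v : E) :
    DifferentiableAt 𝕜 (fun y => fderiv 𝕜 f y v) x :=
  ((hf.fderiv_right (m := 1) (by norm_num)).clm_apply contDiffAt_const).differentiableAt one_ne_zero

theorem IsLocalMin.deriv_deriv_nonneg {g : ℝ → ℝ} {a : ℝ} (hmin : IsLocalMin g a)
    (hc : ContinuousAt g a) : 0 ≤ deriv (deriv g) a := by
  by_contra! hneg
  have hmax : IsLocalMax g a := isLocalMax_of_deriv_deriv_neg hneg hmin.deriv_eq_zero hc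
  have hconst : g =ᶠ[𝓝 a] fun _ => g a := by
    filter_upwards [hmin, hmax] with t h₁ h₂ using le_antisymm h₂ h₁
  have hzero : deriv (deriv g) a = 0 := by
    rw [hconst.deriv.deriv_eq, deriv_const']
    exact deriv_const a 0
  exact hneg.ne hzero

theorem hasDerivAt_comp_add_smul {E G : Type*} [NormedAddCommGroup E] [NormedSpace ℝ E]
    [NormedAddCommGroup G] [NormedSpace ℝ G] {F : E → G} {x v : E} {t : ℝ} (hF : DifferentiableAt ℝ F (x + t • v)) :
    HasDerivAt (fun s : ℝ => F (x + s • v)) (fderiv ℝ F (x + t • v) v) t := by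
  have hline : HasDerivAt (fun s : ℝ => x + s • v) v t := by
    simpa using ((hasDerivAt_id t).smul_const v).const_add x
  exact hF.hasFDerivAt.comp_hasDerivAt t hline

theorem IsLocalMin.fderiv_fderiv_nonneg {E : Type*} [NormedAddCommGroup E] [NormedSpace ℝ E]
    {f : E → ℝ} {x : E} (hf : ContDiffAt ℝ 2 f x) (hmin : IsLocalMin f x) (v : E) :
    0 ≤ fderiv ℝ (fun y => fderiv ℝ f y v) x v := by
  set g : ℝ → ℝ := fun t => f (x + t • v)
  have hline : Tendsto (fun t : ℝ => x + t • v) (𝓝 0) (𝓝 x) := by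
    have : Continuous fun t : ℝ => x + t • v := by fun_prop
    simpa using this.tendsto 0
  have hgmin : IsLocalMin g 0 := by simpa [g, IsLocalMin, IsMinFilter] using hline.eventually hmin
  have hg' : deriv g =ᶠ[𝓝 0] fun t => fderiv ℝ f (x + t • v) v :=
    (hline.eventually (hf.of_le (by norm_num)).eventually_differentiableAt).mono
      fun t ht => (hasDerivAt_comp_add_smul ht).deriv
  have hg'' : deriv (deriv g) 0 = fderiv ℝ (fun y => fderiv ℝ f y v) x v := by
    rw [hg'.deriv_eq]
    simpa using (hasDerivAt_comp_add_smul (t := 0) (v := v)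
      (by simpa using hf.differentiableAt_fderiv_apply v)).deriv
  rw [← hg'']
  exact hgmin.deriv_deriv_nonneg
    (by simpa [ContinuousAt, g, Function.comp_def] using hf.continuousAt.tendsto.comp hline)

theorem lap2_nonneg_of_isLocalMin {f : Plane → ℝ} {x : Plane} (hf : ContDiffAt ℝ 2 f x)
    (hmin : IsLocalMin f x) : 0 ≤ lap2 f x :=
  Finset.sum_nonneg fun _ _ => hmin.fderiv_fderiv_nonneg hf _

theorem nonneg_of_tendsto_cocompact_of_lap2_neg {u : Plane → ℝ} (hu : Continuous u)
    (h0 : Tendsto u (cocompact Plane) (𝓝 0))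
    (hlap : ∀ x, u x < 0 → ContDiffAt ℝ 2 u x ∧ lap2 u x < 0) (x : Plane) : 0 ≤ u x := by
  by_contra! hx
  obtain ⟨x₀, hx₀⟩ :=
    hu.exists_forall_le' x ((h0.eventually (lt_mem_nhds hx)).mono fun _ => le_of_lt)
  obtain ⟨hdiff, hneg⟩ := hlap x₀ ((hx₀ x).trans_lt hx)
  exact hneg.not_ge (lap2_nonneg_of_isLocalMin hdiff (Eventually.of_forall hx₀))

theorem lap2_neg (f : Plane → ℝ) (x : Plane) : lap2 (fun y => -f y) x = -lap2 f x := by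
  have hpd (g : Plane → ℝ) (a : Fin 2) : pdR a (fun y => -g y) = fun y => -pdR a g y := by
    funext y
    simp [pdR]
  simp [lap2, hpd]

theorem pdR_add {f g : Plane → ℝ} {x : Plane} (hf : DifferentiableAt ℝ f x)
    (hg : DifferentiableAt ℝ g x) (a : Fin 2) :
    pdR a (fun y => f y + g y) x = pdR a f x + pdR a g x := by
  simp [pdR, fderiv_fun_add hf hg]

theorem lap2_add {f g : Plane → ℝ} {x : Plane} (hf : ContDiffAt ℝ 2 f x)
    (hg : ContDiffAt ℝ 2 g x) : lap2 (fun y => f y + g y) x = lap2 f x + lap2 g x := by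
  have hpd (a : Fin 2) : pdR a (fun y => f y + g y) =ᶠ[𝓝 x] fun y => pdR a f y + pdR a g y := by
    filter_upwards [(hf.of_le (by norm_num)).eventually_differentiableAt,
      (hg.of_le (by norm_num)).eventually_differentiableAt] with y hfy hgy using pdR_add hfy hgy a
  simp only [lap2, ← Finset.sum_add_distrib]
  refine Finset.sum_congr rfl fun a _ => ?_
  rw [pdR, (hpd a).fderiv_eq, ← pdR,
    pdR_add (f := pdR a f) (g := pdR a g) (hf.differentiableAt_fderiv_apply _)
      (hg.differentiableAt_fderiv_apply _)]

theorem hasFDerivAt_norm {E : Type*} [NormedAddCommGroup E] [InnerProductSpace ℝ E] {x : E}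
    (hx : x ≠ 0) : HasFDerivAt (fun y : E => ‖y‖) (‖x‖⁻¹ • innerSL ℝ x) x := by
  have h := (hasStrictFDerivAt_norm_sq x).hasFDerivAt.sqrt (by positivity)
  simp only [sqrt_sq (norm_nonneg _)] at h
  convert h using 1
  ext v
  simp only [smul_apply, coe_innerSL_apply, smul_eq_mul, one_div, mul_inv_rev,
    nsmul_eq_mul, Nat.cast_ofNat]
  field_simp

theorem pdR_comp_norm {φ : ℝ → ℝ} {d : ℝ} {y : Plane} (hy : y ≠ 0) (hφ : HasDerivAt φ d ‖y‖)
    (a : Fin 2) : pdR a (fun z => φ ‖z‖) y = d / ‖y‖ * y a := by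
  have h : HasFDerivAt (fun z => φ ‖z‖) (d • ‖y‖⁻¹ • innerSL ℝ y) y :=
    hφ.comp_hasFDerivAt y (hasFDerivAt_norm hy)
  rw [pdR, h.fderiv]
  simp only [smul_apply, coe_innerSL_apply,
    EuclideanSpace.inner_single_right, ringHom_apply, one_mul, smul_eq_mul]
  ring

theorem lap2_comp_norm {φ φ' : ℝ → ℝ} {φ'' : ℝ} {x : Plane} (hx : x ≠ 0)
    (hφ : ∀ᶠ r in 𝓝 ‖x‖, HasDerivAt φ (φ' r) r) (hφ' : HasDerivAt φ' φ'' ‖x‖) :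
    lap2 (fun y => φ ‖y‖) x = φ'' + φ' ‖x‖ / ‖x‖ := by
  have hr : ‖x‖ ≠ 0 := norm_ne_zero_iff.mpr hx
  have hgrad (a : Fin 2) :
      pdR a (fun y => φ ‖y‖) =ᶠ[𝓝 x] fun y => φ' ‖y‖ / ‖y‖ * y a := by
    filter_upwards [continuous_norm.continuousAt.eventually hφ, eventually_ne_nhds hx]
      with y hφy hy using pdR_comp_norm hy hφy a
  have hradial : HasFDerivAt (fun y : Plane => φ' ‖y‖ / ‖y‖)
      (((φ'' * ‖x‖ - φ' ‖x‖ * 1) / ‖x‖ ^ 2) • (‖x‖⁻¹ • innerSL ℝ x)) x :=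
    (hφ'.div (hasDerivAt_id _) hr).comp_hasFDerivAt x (hasFDerivAt_norm hx)
  have hsecond (a : Fin 2) : pdR a (pdR a fun y => φ ‖y‖) x =
      (φ'' * ‖x‖ - φ' ‖x‖) / ‖x‖ ^ 3 * x a ^ 2 + φ' ‖x‖ / ‖x‖ := by
    have h : HasFDerivAt (fun y : Plane => φ' ‖y‖ / ‖y‖ * y a) _ x :=
      hradial.fun_mul (EuclideanSpace.proj a : Plane →L[ℝ] ℝ).hasFDerivAt
    rw [pdR, (hgrad a).fderiv_eq, h.fderiv]
    simp only [mul_one, add_apply, smul_apply,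
      PiLp.proj_apply, PiLp.single_eq_same, smul_eq_mul, coe_innerSL_apply,
      EuclideanSpace.inner_single_right, ringHom_apply, one_mul]
    field_simp
    ring
  have hsum : x 0 ^ 2 + x 1 ^ 2 = ‖x‖ ^ 2 := by
    simp [EuclideanSpace.real_norm_sq_eq, Fin.sum_univ_two]
  simp only [lap2, Fin.sum_univ_two, hsecond]
  field_simp
  linear_combination (φ'' * ‖x‖ - φ' ‖x‖) * hsum

theorem lap2_const_mul_exp_neg_mul_norm (c γ : ℝ) {x : Plane} (hx : x ≠ 0) :
    lap2 (fun y => c * exp (-(γ * ‖y‖))) x = c * (γ ^ 2 - γ / ‖x‖) * exp (-(γ * ‖x‖)) := by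
  have hlin (r : ℝ) : HasDerivAt (fun r => -(γ * r)) (-γ) r := by
    simpa using ((hasDerivAt_id' r).const_mul γ).fun_neg
  have hφ (r : ℝ) : HasDerivAt (fun r => c * exp (-(γ * r))) (-(c * γ * exp (-(γ * r)))) r :=
    ((hlin r).exp.const_mul c).congr_deriv (by ring)
  have hφ' : HasDerivAt (fun r => -(c * γ * exp (-(γ * r))))
      (c * γ ^ 2 * exp (-(γ * ‖x‖))) ‖x‖ :=
    ((hlin ‖x‖).exp.const_mul (c * γ)).neg.congr_deriv (by ring)
  rw [lap2_comp_norm hx (Eventually.of_forall hφ) hφ']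
  ring

theorem barrier_add_nonneg {γ R A c : ℝ} {W ψ η : Plane → ℝ} (hγ : 0 < γ) (hR : 0 ≤ R)
    (hc : 0 ≤ c) (hcA : 2 * A ≤ c * (1 - γ ^ 2))
    (hW : ∀ x, R < ‖x‖ → (1 + γ ^ 2) / 2 ≤ W x)
    (hψ : ContDiff ℝ 2 ψ) (hψ0 : Tendsto ψ (cocompact Plane) (𝓝 0))
    (hball : ∀ x, ‖x‖ ≤ R → 0 ≤ c * exp (-(γ * ‖x‖)) + ψ x)
    (heq : ∀ x, -(lap2 ψ x) + W x * ψ x = η x) (hη : ∀ x, -η x ≤ A * exp (-(γ * ‖x‖)))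
    (x : Plane) : 0 ≤ c * exp (-(γ * ‖x‖)) + ψ x := by
  have hcont : Continuous fun y : Plane => c * exp (-(γ * ‖y‖)) + ψ y := by
    have := hψ.continuous
    fun_prop
  refine nonneg_of_tendsto_cocompact_of_lap2_neg hcont ?_ (fun x hx => ?_) x
  · simpa using ((tendsto_exp_neg_atTop_nhds_zero.comp
      (tendsto_norm_cocompact_atTop.const_mul_atTop hγ)).const_mul c).add hψ0
  have hxR : R < ‖x‖ := by
    by_contra! h
    exact hx.not_ge (hball x h)
  have hx0 : x ≠ 0 := norm_pos_iff.mp (hR.trans_lt hxR)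
  have hbarrier : ContDiffAt ℝ 2 (fun y : Plane => c * exp (-(γ * ‖y‖))) x := by
    have := contDiffAt_norm ℝ (n := 2) hx0
    fun_prop
  refine ⟨hbarrier.add hψ.contDiffAt, ?_⟩
  rw [lap2_add hbarrier hψ.contDiffAt, lap2_const_mul_exp_neg_mul_norm c γ hx0]
  have hηx := hη x
  set e := exp (-(γ * ‖x‖))
  have he : 0 < e := exp_pos _
  have hγr : 0 ≤ c * γ / ‖x‖ * e := by positivity
  have hWu : W x * (c * e + ψ x) < 0 :=
    mul_neg_of_pos_of_neg (lt_of_lt_of_le (by positivity) (hW x hxR)) hx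
  have hWc : (1 + γ ^ 2) / 2 * (c * e) ≤ W x * (c * e) :=
    mul_le_mul_of_nonneg_right (hW x hxR) (by positivity)
  have hAe : 2 * A * e ≤ c * (1 - γ ^ 2) * e := mul_le_mul_of_nonneg_right hcA he.le
  linear_combination -heq x + hηx + hγr + hWu + hWc + hAe / 2

/-- Exponential decay for bounded solutions of `(−Δ + W)ψ = η` on `ℝ²`, where
`0 ≤ W ≤ 1`, `W(x) ≥ 1 − C₀ e^{−|x|}`, `ψ → 0` at infinity with `|ψ| ≤ M`, and
`|η(x)| ≤ A e^{−γ|x|}` for some `γ ∈ (0,1)`: then `|ψ(x)| ≤ C A e^{−γ|x|}` with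
`C = C(γ, C₀, M, A)` independent of `W`, `ψ`, `η`. -/
theorem schroedinger_exponential_decay
    (γ C₀ M A : ℝ) (hγ0 : 0 < γ) (hγ1 : γ < 1) (hC₀ : 0 < C₀) (hM : 0 ≤ M)
    (hA : 0 < A) :
    ∃ C > (0 : ℝ), ∀ (W : Plane → ℝ) (ψ η : Plane → ℝ),
      Continuous W → (∀ x, 0 ≤ W x) → (∀ x, W x ≤ 1) →
      (∀ x : Plane, 1 - C₀ * Real.exp (-‖x‖) ≤ W x) →
      ContDiff ℝ 2 ψ →
      Filter.Tendsto ψ (Filter.cocompact Plane) (nhds 0) →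
      (∀ x, |ψ x| ≤ M) →
      (∀ x : Plane, -(lap2 ψ x) + W x * ψ x = η x) →
      (∀ x : Plane, |η x| ≤ A * Real.exp (-(γ * ‖x‖))) →
      ∀ x : Plane, |ψ x| ≤ C * A * Real.exp (-(γ * ‖x‖)) := by
  have hγ2 : 0 < 1 - γ ^ 2 := by nlinarith
  obtain ⟨R, hR, hR0⟩ : ∃ R, C₀ * exp (-R) ≤ (1 - γ ^ 2) / 2 ∧ 0 ≤ R :=
    (((tendsto_exp_neg_atTop_nhds_zero.const_mul C₀).eventually
      (ge_mem_nhds (by simpa using half_pos hγ2))).and (eventually_ge_atTop 0)).exists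
  set C := 2 / (1 - γ ^ 2) + M / A * exp (γ * R) with hC
  have hCA : C * A = 2 * A / (1 - γ ^ 2) + M * exp (γ * R) := by
    rw [hC]
    field_simp
  have hcA : 2 * A ≤ C * A * (1 - γ ^ 2) := by
    rw [hCA, add_mul, div_mul_cancel₀ _ hγ2.ne']
    exact le_add_of_nonneg_right (by positivity)
  have hball (x : Plane) (hx : ‖x‖ ≤ R) : M ≤ C * A * exp (-(γ * ‖x‖)) :=
    calc M ≤ M * exp (γ * R) * exp (-(γ * ‖x‖)) := by
          rw [mul_assoc, ← exp_add]
          exact le_mul_of_one_le_right hM (one_le_exp (by nlinarith))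
      _ ≤ C * A * exp (-(γ * ‖x‖)) := by
          refine mul_le_mul_of_nonneg_right ?_ (exp_pos _).le
          rw [hCA]
          exact le_add_of_nonneg_left (by positivity)
  refine ⟨C, by positivity, fun W ψ η _ _ _ hWlow hψ hψ0 hψM heq hη => ?_⟩
  have hW (x : Plane) (hx : R < ‖x‖) : (1 + γ ^ 2) / 2 ≤ W x := by
    have : C₀ * exp (-‖x‖) ≤ C₀ * exp (-R) := by gcongr
    linarith [hWlow x]
  have hlower := barrier_add_nonneg hγ0 hR0 (by positivity) hcA hW hψ hψ0
    (fun x hx => by linarith [hball x hx, (abs_le.mp (hψM x)).1]) heq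
    (fun x => by linarith [(abs_le.mp (hη x)).1])
  have hupper := barrier_add_nonneg (η := fun x => -η x) hγ0 hR0 (by positivity) hcA hW hψ.neg
    (by simpa using hψ0.neg) (fun x hx => by linarith [hball x hx, (abs_le.mp (hψM x)).2])
    (fun x => by rw [lap2_neg]; linarith [heq x]) (fun x => by linarith [(abs_le.mp (hη x)).2])
  exact fun x => abs_le.mpr ⟨by linarith [hlower x], by linarith [hupper x]⟩
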